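/- Let n ≥ 1, l, r̃ ∈ ℝ, σ ∈ ℝ, K > 0 and ε ∈ [0,1]. Set f_ε(s) = (1+εs)^{−K/2} for s ≥ 0, and for (τ_b,μ_b) ≠ 0 set r_ε(τ_b,μ_b) = r̃ − (K/2)·ε(τ_b²+|μ_b|²)/(1+ε(τ_b²+|μ_b|²)). With p(x,τ_b,μ_b) = x²(τ_b²+|μ_b|²) − 2σxτ_b and a(x,τ_b,μ_b) = x^{−2l−1}(τ_b²+|μ_b|²)^{r̃−1/2}, the b-Poisson bracket of p with the regularized symbol a·f_ε(τ_b²+|μ_b|²) satisfies, at every point with (τ_b,μ_b) ≠ 0: {p, a·f_ε(τ_b²+|μ_b|²)} = f_ε(τ_b²+|μ_b|²)·x^{−2l}(τ_b²+|μ_b|²)^{r̃−3/2}·( 4σ((l+r_ε)τ_b² + (l+1/2)|μ_b|²) − 4x(l+r_ε)τ_b(τ_b²+|μ_b|²) ), i.e. the effect of the regularizer is an overall factor f_ε and the replacement of r̃ (except in the exponent) by r_ε. -/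

import Mathlib

/-!
Write `q = τ_b² + |μ_b|²` and `g = x^c W(q)` with `c = −2l−1` and `W(s) = s^a (1+εs)^b`,
`a = r̃ − 1/2`, `b = −K/2`. Logarithmic differentiation gives
`W'(s) = (W(s)/s)·(a + b·εs/(1+εs)) = (W(s)/s)·(r_ε − 1/2)`, so the regularizer only
multiplies `W` by `f_ε` and shifts `r̃` to `r_ε` in the derivative. The bracket
`(∂_τ p)(c g) − (x ∂ₓ p)(x^c W'(q) 2τ_b)` is then a polynomial identity in `x, τ_b, |μ_b|`.
-/

open Real

/-- The b-Poisson bracket on the b-phase space `(x, τ_b, μ_b) ∈ (0,∞) × ℝ × ℝ^{n-1}`, for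
symbols independent of the boundary variables `y`:
`{f, g} = (∂_{τ_b} f)(x ∂ₓ g) − (x ∂ₓ f)(∂_{τ_b} g)`. -/
noncomputable def bBracket {m : ℕ} (f g : ℝ → ℝ → EuclideanSpace ℝ (Fin m) → ℝ)
    (x τ : ℝ) (μ : EuclideanSpace ℝ (Fin m)) : ℝ :=
  deriv (fun t => f x t μ) τ * (x * deriv (fun s => g s τ μ) x)
    - (x * deriv (fun s => f s τ μ) x) * deriv (fun t => g x t μ) τ

lemma sq_add_sq_norm_pos {E : Type*} [NormedAddCommGroup E] {τ : ℝ} {μ : E}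
    (h : (τ, μ) ≠ 0) : 0 < τ ^ 2 + ‖μ‖ ^ 2 := by
  rcases eq_or_ne τ 0 with rfl | hτ
  · have hμ : μ ≠ 0 := fun hμ => h (by simp [hμ])
    have := norm_pos_iff.mpr hμ
    positivity
  · positivity

lemma bBracket_eq_of_hasDerivAt {m : ℕ} {f g : ℝ → ℝ → EuclideanSpace ℝ (Fin m) → ℝ}
    {x τ : ℝ} {μ : EuclideanSpace ℝ (Fin m)} {fτ fx gτ gx : ℝ}
    (hfτ : HasDerivAt (fun t => f x t μ) fτ τ) (hfx : HasDerivAt (fun s => f s τ μ) fx x)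
    (hgτ : HasDerivAt (fun t => g x t μ) gτ τ) (hgx : HasDerivAt (fun s => g s τ μ) gx x) :
    bBracket f g x τ μ = fτ * (x * gx) - (x * fx) * gτ := by
  simp only [bBracket, hfτ.deriv, hfx.deriv, hgτ.deriv, hgx.deriv]

lemma hasDerivAt_rpow_mul_one_add_mul_rpow {a b ε s : ℝ} (hs : 0 < s)
    (hεs : 0 < 1 + ε * s) :
    HasDerivAt (fun s => s ^ a * (1 + ε * s) ^ b)
      (s ^ a * (1 + ε * s) ^ b * (a + b * (ε * s / (1 + ε * s))) / s) s := by
  have hA : HasDerivAt (fun s => s ^ a) (a * s ^ (a - 1)) s :=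
    hasDerivAt_rpow_const (Or.inl hs.ne')
  have hB : HasDerivAt (fun s => (1 + ε * s) ^ b) (ε * 1 * b * (1 + ε * s) ^ (b - 1)) s :=
    (((hasDerivAt_id s).const_mul ε).const_add 1).rpow_const (Or.inl hεs.ne')
  refine (hA.mul hB).congr_deriv ?_
  rw [rpow_sub_one hs.ne', rpow_sub_one hεs.ne']
  field_simp

section Symbols

variable {E : Type*} [NormedAddCommGroup E] (μ : E)

lemma hasDerivAt_sq_add_sq_norm (τ : ℝ) :
    HasDerivAt (fun t : ℝ => t ^ 2 + ‖μ‖ ^ 2) (2 * τ) τ := by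
  simpa using (hasDerivAt_pow 2 τ).add_const (‖μ‖ ^ 2)

lemma hasDerivAt_principalSymbol_tau (σ x τ : ℝ) :
    HasDerivAt (fun t => x ^ 2 * (t ^ 2 + ‖μ‖ ^ 2) - 2 * σ * x * t)
      (x ^ 2 * (2 * τ) - 2 * σ * x) τ := by
  refine (((hasDerivAt_sq_add_sq_norm μ τ).const_mul (x ^ 2)).sub
    ((hasDerivAt_id τ).const_mul (2 * σ * x))).congr_deriv ?_
  ring

lemma hasDerivAt_principalSymbol_x (σ x τ : ℝ) :
    HasDerivAt (fun s => s ^ 2 * (τ ^ 2 + ‖μ‖ ^ 2) - 2 * σ * s * τ)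
      (2 * x * (τ ^ 2 + ‖μ‖ ^ 2) - 2 * σ * τ) x := by
  refine (((hasDerivAt_pow 2 x).mul_const (τ ^ 2 + ‖μ‖ ^ 2)).sub
    (((hasDerivAt_id x).const_mul (2 * σ)).mul_const τ)).congr_deriv ?_
  ring

lemma hasDerivAt_regularizedSymbol_tau {a b c ε x τ : ℝ} (hq : 0 < τ ^ 2 + ‖μ‖ ^ 2)
    (hεq : 0 < 1 + ε * (τ ^ 2 + ‖μ‖ ^ 2)) :
    HasDerivAt (fun t => x ^ c * (t ^ 2 + ‖μ‖ ^ 2) ^ a * (1 + ε * (t ^ 2 + ‖μ‖ ^ 2)) ^ b)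
      (x ^ c * ((τ ^ 2 + ‖μ‖ ^ 2) ^ a * (1 + ε * (τ ^ 2 + ‖μ‖ ^ 2)) ^ b *
        (a + b * (ε * (τ ^ 2 + ‖μ‖ ^ 2) / (1 + ε * (τ ^ 2 + ‖μ‖ ^ 2)))) /
          (τ ^ 2 + ‖μ‖ ^ 2) * (2 * τ))) τ := by
  simp only [mul_assoc (x ^ c)]
  exact (((hasDerivAt_rpow_mul_one_add_mul_rpow hq hεq).comp τ
    (hasDerivAt_sq_add_sq_norm μ τ)).const_mul (x ^ c))

lemma hasDerivAt_regularizedSymbol_x {a b c ε x : ℝ} (τ : ℝ) (hx : 0 < x) :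
    HasDerivAt (fun s => s ^ c * (τ ^ 2 + ‖μ‖ ^ 2) ^ a * (1 + ε * (τ ^ 2 + ‖μ‖ ^ 2)) ^ b)
      (c * x ^ (c - 1) * (τ ^ 2 + ‖μ‖ ^ 2) ^ a * (1 + ε * (τ ^ 2 + ‖μ‖ ^ 2)) ^ b) x :=
  ((hasDerivAt_rpow_const (Or.inl hx.ne')).mul_const _).mul_const _

end Symbols

theorem commutator_symbol_regularized_general (n : ℕ) (l r σ K ε : ℝ)
    (hε : ε ∈ Set.Icc (0 : ℝ) 1)
    (x τb : ℝ) (hx : 0 < x) (μb : EuclideanSpace ℝ (Fin (n - 1)))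
    (hne : (τb, μb) ≠ 0) :
    bBracket
        (fun x τ μ => x ^ 2 * (τ ^ 2 + ‖μ‖ ^ 2) - 2 * σ * x * τ)
        (fun x τ μ => x ^ (-2 * l - 1) * (τ ^ 2 + ‖μ‖ ^ 2) ^ (r - 1 / 2) *
          (1 + ε * (τ ^ 2 + ‖μ‖ ^ 2)) ^ (-K / 2))
        x τb μb
      = (1 + ε * (τb ^ 2 + ‖μb‖ ^ 2)) ^ (-K / 2) *
          (x ^ (-2 * l) * (τb ^ 2 + ‖μb‖ ^ 2) ^ (r - 3 / 2) *
            (4 * σ * ((l + (r - K / 2 * (ε * (τb ^ 2 + ‖μb‖ ^ 2) /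
                  (1 + ε * (τb ^ 2 + ‖μb‖ ^ 2))))) * τb ^ 2
                + (l + 1 / 2) * ‖μb‖ ^ 2)
              - 4 * x * (l + (r - K / 2 * (ε * (τb ^ 2 + ‖μb‖ ^ 2) /
                  (1 + ε * (τb ^ 2 + ‖μb‖ ^ 2))))) * τb * (τb ^ 2 + ‖μb‖ ^ 2))) := by
  have hq := sq_add_sq_norm_pos hne
  have hεq : 0 < 1 + ε * (τb ^ 2 + ‖μb‖ ^ 2) := by nlinarith [hε.1]
  rw [bBracket_eq_of_hasDerivAt (hasDerivAt_principalSymbol_tau μb σ x τb)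
      (hasDerivAt_principalSymbol_x μb σ x τb) (hasDerivAt_regularizedSymbol_tau μb hq hεq)
      (hasDerivAt_regularizedSymbol_x (a := r - 1 / 2) (b := -K / 2) (ε := ε) μb τb hx),
    rpow_sub_one hx.ne', rpow_sub_one hx.ne',
    show r - 3 / 2 = r - 1 / 2 - 1 by ring, rpow_sub_one hq.ne']
  field_simp
  ring

/-- The regularized commutator computation (Lemma 4.2 together with the regularizer of
Remark 4.2): with `p = x²(τ_b²+|μ_b|²) − 2σxτ_b`, `a = x^{−2l−1}(τ_b²+|μ_b|²)^{r̃−1/2}`,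
`f_ε(s) = (1+εs)^{−K/2}` and
`r_ε = r̃ − (K/2)·ε(τ_b²+|μ_b|²)/(1+ε(τ_b²+|μ_b|²))`, at every point with `(τ_b,μ_b) ≠ 0`,
`{p, a f_ε(τ_b²+|μ_b|²)} = f_ε(τ_b²+|μ_b|²) x^{−2l}(τ_b²+|μ_b|²)^{r̃−3/2}
   (4σ((l+r_ε)τ_b² + (l+1/2)|μ_b|²) − 4x(l+r_ε)τ_b(τ_b²+|μ_b|²))`. -/
theorem commutator_symbol_regularized (n : ℕ) (hn : 1 ≤ n) (l r σ K ε : ℝ)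
    (hK : 0 < K) (hε : ε ∈ Set.Icc (0 : ℝ) 1)
    (x τb : ℝ) (hx : 0 < x) (μb : EuclideanSpace ℝ (Fin (n - 1)))
    (hne : (τb, μb) ≠ 0) :
    bBracket
        (fun x τ μ => x ^ 2 * (τ ^ 2 + ‖μ‖ ^ 2) - 2 * σ * x * τ)
        (fun x τ μ => x ^ (-2 * l - 1) * (τ ^ 2 + ‖μ‖ ^ 2) ^ (r - 1 / 2) *
          (1 + ε * (τ ^ 2 + ‖μ‖ ^ 2)) ^ (-K / 2))
        x τb μb
      = (1 + ε * (τb ^ 2 + ‖μb‖ ^ 2)) ^ (-K / 2) *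
          (x ^ (-2 * l) * (τb ^ 2 + ‖μb‖ ^ 2) ^ (r - 3 / 2) *
            (4 * σ * ((l + (r - K / 2 * (ε * (τb ^ 2 + ‖μb‖ ^ 2) /
                  (1 + ε * (τb ^ 2 + ‖μb‖ ^ 2))))) * τb ^ 2
                + (l + 1 / 2) * ‖μb‖ ^ 2)
              - 4 * x * (l + (r - K / 2 * (ε * (τb ^ 2 + ‖μb‖ ^ 2) /
                  (1 + ε * (τb ^ 2 + ‖μb‖ ^ 2))))) * τb * (τb ^ 2 + ‖μb‖ ^ 2))) :=
  commutator_symbol_regularized_general n l r σ K ε hε x τb hx μb hne
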